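/- Let k ≥ 2 be an integer and let Q, q be reals with 0 < Q < 1 and Q < q < min{1, kQ}, and let y ∈ (0,1) be the unique root of q = Q(1−y^k)/(1−y). Consider functions ρ : {0,1}^k → (0,1) satisfying the constraints Σ_{u ∈ {0,1}^k} ρ(u) = 1, ρ(0…0) = 1−q, and Σ_{u : u_i = 1} ρ(u) = Q for every i ∈ {1,…,k}, and define F(ρ) := Σ_{u ∈ {0,1}^k} ρ(u)·log₂ρ(u) + k·h(Q). Then the function ρ* given by ρ*(0…0) = 1−q and ρ*(u) = (Q/(1−y))·(1−y)^{w(u)}·y^{k−w(u)} for u ≠ 0…0 (w(u) denoting the Hamming weight of u) satisfies all the constraints, F(ρ*) = A(k,Q,q), and F(ρ) ≥ A(k,Q,q) for every ρ satisfying the constraints, with equality only for ρ = ρ*. -/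

import Mathlib

/-- `y(k,Q,q)`: the unique root `y ∈ (0,1)` of `q = Q(1−y^k)/(1−y)` (realized as the
supremum of the solution set, which is a singleton in the considered range). -/
noncomputable def rootY (k : ℕ) (Q q : ℝ) : ℝ :=
  sSup {y : ℝ | y ∈ Set.Ioo (0 : ℝ) 1 ∧ q = Q * (1 - y ^ k) / (1 - y)}

/-- Binary entropy `h(Q) = −Q log₂ Q − (1−Q) log₂(1−Q)`. -/
noncomputable def binH (Q : ℝ) : ℝ :=
  -Q * Real.logb 2 Q - (1 - Q) * Real.logb 2 (1 - Q)

/-- `A(k,Q,q) = (1−q)log₂(1−q) + q log₂[Q y^k/(1−y)] + kQ log₂[(1−y)/y] + k·h(Q)`,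
where `y = y(k,Q,q)` is the unique root of `q = Q(1−y^k)/(1−y)` in `(0,1)`. -/
noncomputable def funA (k : ℕ) (Q q : ℝ) : ℝ :=
  (1 - q) * Real.logb 2 (1 - q)
    + q * Real.logb 2 (Q * rootY k Q q ^ k / (1 - rootY k Q q))
    + (k : ℝ) * Q * Real.logb 2 ((1 - rootY k Q q) / rootY k Q q)
    + (k : ℝ) * binH Q

/-- Hamming weight of a binary vector. -/
def wt {k : ℕ} (u : Fin k → Bool) : ℕ :=
  (Finset.univ.filter fun i => u i = true).card

/-!
Away from `0…0`, `log₂ ρ*(u)` is an affine function of the Hamming weight `w(u)`, while the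
constraints fix both `Σ_{u ≠ 0…0} ρ(u) = q` and `Σ_u ρ(u) w(u) = kQ`. Hence the cross entropy
`Σ_u ρ(u) log₂ ρ*(u)` takes the same value `A(k,Q,q) − k·h(Q)` for every admissible `ρ`,
including `ρ*` itself, and Gibbs' inequality `Σ ρ log₂ ρ* ≤ Σ ρ log₂ ρ`, with equality only for
`ρ = ρ*`, finishes the proof. The root `y` exists and is unique because
`Q(1 − y^k)/(1 − y) = Q(1 + y + ⋯ + y^{k−1})` increases from `Q` to `kQ` on `[0, 1]`.
-/

open Finset Real InformationTheory

section Gibbs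

variable {ι : Type*} [Fintype ι] {b : ℝ} {p r : ι → ℝ}

lemma sum_mul_logb_sub_sum_mul_logb (hp : ∀ i, 0 < p i) (hr : ∀ i, 0 < r i)
    (hsum : ∑ i, p i = ∑ i, r i) :
    ∑ i, p i * logb b (p i) - ∑ i, p i * logb b (r i)
      = (∑ i, r i * klFun (p i / r i)) / log b := by
  have hterm : ∀ i, p i * logb b (p i) - p i * logb b (r i)
      = (r i * klFun (p i / r i) + (p i - r i)) / log b := by
    intro i
    have hri := (hr i).ne'
    rw [klFun_apply, logb, logb, log_div (hp i).ne' hri]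
    field_simp
    ring
  rw [← sum_sub_distrib, sum_congr rfl fun i _ => hterm i, ← sum_div, sum_add_distrib,
    sum_sub_distrib, hsum, sub_self, add_zero]

lemma sum_mul_logb_le_sum_mul_logb (hb : 1 < b) (hp : ∀ i, 0 < p i) (hr : ∀ i, 0 < r i)
    (hsum : ∑ i, p i = ∑ i, r i) :
    ∑ i, p i * logb b (r i) ≤ ∑ i, p i * logb b (p i) := by
  have hdiff := sum_mul_logb_sub_sum_mul_logb (b := b) hp hr hsum
  have hnonneg : 0 ≤ (∑ i, r i * klFun (p i / r i)) / log b :=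
    div_nonneg (sum_nonneg fun i _ =>
      mul_nonneg (hr i).le (klFun_nonneg (div_pos (hp i) (hr i)).le)) (log_pos hb).le
  linarith

lemma eq_of_sum_mul_logb_eq (hb : 1 < b) (hp : ∀ i, 0 < p i) (hr : ∀ i, 0 < r i)
    (hsum : ∑ i, p i = ∑ i, r i) (heq : ∑ i, p i * logb b (p i) = ∑ i, p i * logb b (r i)) :
    p = r := by
  have hzero : ∑ i, r i * klFun (p i / r i) = 0 := by
    have := sum_mul_logb_sub_sum_mul_logb (b := b) hp hr hsum
    rw [heq, sub_self, eq_comm, div_eq_zero_iff] at this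
    exact this.resolve_right (log_pos hb).ne'
  rw [sum_eq_zero_iff_of_nonneg fun i _ =>
    mul_nonneg (hr i).le (klFun_nonneg (div_pos (hp i) (hr i)).le)] at hzero
  funext i
  have := (mul_eq_zero.1 (hzero i (mem_univ i))).resolve_left (hr i).ne'
  rw [klFun_eq_zero_iff (div_pos (hp i) (hr i)).le, div_eq_one_iff_eq (hr i).ne'] at this
  exact this

end Gibbs

lemma lt_sum_of_pos {ι : Type*} [Fintype ι] [Nontrivial ι] {f : ι → ℝ} (hf : ∀ i, 0 < f i)
    (i : ι) : f i < ∑ j, f j :=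
  have ⟨j, hj⟩ := exists_ne i
  single_lt_sum hj (mem_univ i) (mem_univ j) (hf j) fun j _ _ => (hf j).le

section BoolCube

variable {k : ℕ}

lemma wt_le (u : Fin k → Bool) : wt u ≤ k := by
  simpa [wt] using card_filter_le univ fun i => u i = true

@[simp]
lemma wt_false : wt (fun _ : Fin k => false) = 0 := by
  simp [wt]

lemma prod_ite_eq_pow_wt_mul_pow {R : Type*} [CommMonoid R] (a b : R) (u : Fin k → Bool) :
    ∏ i, (if u i then a else b) = a ^ wt u * b ^ (k - wt u) := by
  rw [prod_ite, prod_const, prod_const, filter_not, card_sdiff_of_subset (filter_subset _ _),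
    card_univ, Fintype.card_fin]
  rfl

lemma sum_pow_wt_mul_pow {R : Type*} [CommSemiring R] (a b : R) :
    ∑ u : Fin k → Bool, a ^ wt u * b ^ (k - wt u) = (a + b) ^ k := by
  simp_rw [← prod_ite_eq_pow_wt_mul_pow]
  rw [← Fintype.prod_sum (fun _ s => if s = true then a else b)]
  simp

lemma sum_filter_pow_wt_mul_pow {R : Type*} [CommSemiring R] (a b : R) (i : Fin k) :
    ∑ u ∈ univ.filter (fun u : Fin k → Bool => u i = true), a ^ wt u * b ^ (k - wt u)
      = a * (a + b) ^ (k - 1) := by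
  -- kill the `u i = false` terms by giving the `i`-th factor the value `0` there
  let g : Fin k → Bool → R := fun j s => if s then a else if j = i then 0 else b
  have hg : ∀ u : Fin k → Bool,
      ∏ j, g j (u j) = if u i = true then a ^ wt u * b ^ (k - wt u) else 0 := by
    intro u
    split_ifs with hui
    · rw [← prod_ite_eq_pow_wt_mul_pow]
      refine prod_congr rfl fun j _ => ?_
      by_cases hj : j = i
      · subst hj; simp [g, hui]
      · simp [g, hj]
    · exact prod_eq_zero (mem_univ i) (by simp [g, hui])
  rw [sum_filter, ← sum_congr rfl fun u _ => hg u, ← Fintype.prod_sum,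
    ← mul_prod_erase _ _ (mem_univ i)]
  have herase : ∀ j ∈ univ.erase i, ∑ s, g j s = a + b := by
    intro j hj
    simp [g, ne_of_mem_erase hj]
  rw [prod_congr rfl herase, prod_const, card_erase_of_mem (mem_univ i), card_univ,
    Fintype.card_fin]
  simp [g]

lemma sum_mul_wt (ρ : (Fin k → Bool) → ℝ) :
    ∑ u, ρ u * wt u = ∑ i, ∑ u ∈ univ.filter (fun u : Fin k → Bool => u i = true), ρ u := by
  simp_rw [wt, natCast_card_filter (R := ℝ), mul_sum, mul_ite, mul_one, mul_zero, sum_filter]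
  exact sum_comm

end BoolCube

noncomputable def productOffZero (k : ℕ) (p₀ c a b : ℝ) (u : Fin k → Bool) : ℝ :=
  if u = (fun _ => false) then p₀ else c * a ^ wt u * b ^ (k - wt u)

section ProductOffZero

variable {k : ℕ} {p₀ c a b : ℝ}

lemma productOffZero_pos (hp₀ : 0 < p₀) (hc : 0 < c) (ha : 0 < a) (hb : 0 < b)
    (u : Fin k → Bool) : 0 < productOffZero k p₀ c a b u := by
  unfold productOffZero
  split_ifs <;> positivity

lemma sum_productOffZero :
    ∑ u, productOffZero k p₀ c a b u = p₀ + c * ((a + b) ^ k - b ^ k) := by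
  have h : ∀ u, productOffZero k p₀ c a b u
      = c * (a ^ wt u * b ^ (k - wt u)) + if u = (fun _ => false) then p₀ - c * b ^ k else 0 := by
    intro u
    unfold productOffZero
    split_ifs with hu
    · simp [hu]
    · ring
  simp_rw [h, sum_add_distrib, ← mul_sum, sum_pow_wt_mul_pow, sum_ite_eq', if_pos (mem_univ _)]
  ring

lemma sum_filter_productOffZero (i : Fin k) :
    ∑ u ∈ univ.filter (fun u : Fin k → Bool => u i = true), productOffZero k p₀ c a b u
      = c * (a * (a + b) ^ (k - 1)) := by
  have h : ∀ u ∈ univ.filter (fun u : Fin k → Bool => u i = true),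
      productOffZero k p₀ c a b u = c * (a ^ wt u * b ^ (k - wt u)) := by
    intro u hu
    have hu0 : u ≠ fun _ => false := fun h => by simp [h] at hu
    rw [productOffZero, if_neg hu0, mul_assoc]
  rw [sum_congr rfl h, ← mul_sum, sum_filter_pow_wt_mul_pow]

lemma logb_productOffZero (β : ℝ) (hc : 0 < c) (ha : 0 < a) (hb : 0 < b)
    (u : Fin k → Bool) :
    logb β (productOffZero k p₀ c a b u)
      = (if u = (fun _ => false) then logb β p₀ - logb β c - k * logb β b else 0)
        + logb β c + wt u * (logb β a - logb β b) + k * logb β b := by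
  unfold productOffZero
  split_ifs with hu
  · simp only [hu, wt_false, CharP.cast_eq_zero]
    ring
  · rw [logb_mul (by positivity) (by positivity), logb_mul hc.ne' (by positivity), logb_pow,
      logb_pow, Nat.cast_sub (wt_le u)]
    ring

lemma sum_mul_logb_productOffZero (β : ℝ) (hc : 0 < c) (ha : 0 < a) (hb : 0 < b) {Q : ℝ}
    (ρ : (Fin k → Bool) → ℝ) (hsum : ∑ u, ρ u = 1)
    (hzero : ρ (fun _ => false) = p₀)
    (hmarg : ∀ i, ∑ u ∈ univ.filter (fun u : Fin k → Bool => u i = true), ρ u = Q) :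
    ∑ u, ρ u * logb β (productOffZero k p₀ c a b u)
      = p₀ * logb β p₀ + (1 - p₀) * (logb β c + k * logb β b)
        + k * Q * (logb β a - logb β b) := by
  have hwt : ∑ u, ρ u * wt u = k * Q := by
    simp [sum_mul_wt, hmarg]
  simp_rw [logb_productOffZero β hc ha hb, mul_add, sum_add_distrib, mul_ite, mul_zero,
    sum_ite_eq', if_pos (mem_univ _), ← sum_mul, ← mul_assoc, ← sum_mul, hsum, hwt, hzero]
  ring

end ProductOffZero

lemma strictMonoOn_geom_sum {k : ℕ} (hk : 1 < k) :
    StrictMonoOn (fun x : ℝ => ∑ i ∈ range k, x ^ i) (Set.Ici 0) := by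
  intro x hx y _ hxy
  refine sum_lt_sum (fun i _ => pow_le_pow_left₀ hx hxy.le i) ⟨1, mem_range.2 hk, ?_⟩
  simpa using hxy

lemma rootY_spec {k : ℕ} {Q q : ℝ} (hQ : 0 < Q) (hQq : Q < q) (hqk : q < k * Q) :
    rootY k Q q ∈ Set.Ioo 0 1 ∧ q * (1 - rootY k Q q) = Q * (1 - rootY k Q q ^ k) := by
  have hk : 1 < k := by
    have : (1 : ℝ) * Q < k * Q := by linarith
    exact_mod_cast lt_of_mul_lt_mul_right this hQ.le
  set g : ℝ → ℝ := fun x => Q * ∑ i ∈ range k, x ^ i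
  have hg : ∀ y : ℝ, y ≠ 1 → Q * (1 - y ^ k) / (1 - y) = g y := by
    intro y hy
    have : 1 - y ≠ 0 := sub_ne_zero.2 hy.symm
    simp only [g, geom_sum_eq hy]
    field_simp
    ring
  have hg0 : g 0 = Q := by simp [g, zero_geom_sum, (zero_lt_one.trans hk).ne']
  have hg1 : g 1 = k * Q := by simp [g, mul_comm]
  have hgmono : StrictMonoOn g (Set.Ici 0) := fun x hx y hy hxy =>
    mul_lt_mul_of_pos_left (strictMonoOn_geom_sum hk hx hy hxy) hQ
  obtain ⟨y, hyI, hgy⟩ := intermediate_value_Icc zero_le_one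
    (by fun_prop : Continuous g).continuousOn (show q ∈ Set.Icc (g 0) (g 1) by
      rw [hg0, hg1]; exact ⟨hQq.le, hqk.le⟩)
  have hy : y ∈ Set.Ioo 0 1 := by
    refine ⟨hyI.1.lt_of_ne ?_, hyI.2.lt_of_ne ?_⟩ <;> rintro rfl
    · exact hQq.ne' (hgy.symm.trans hg0)
    · exact hqk.ne (hgy.symm.trans hg1)
  have hroots : {y : ℝ | y ∈ Set.Ioo 0 1 ∧ q = Q * (1 - y ^ k) / (1 - y)} = {y} := by
    ext z
    simp only [Set.mem_ofPred_eq, Set.mem_singleton_iff]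
    constructor
    · rintro ⟨hz, hzq⟩
      rw [hg z hz.2.ne] at hzq
      exact hgmono.injOn hz.1.le hy.1.le (hzq.symm.trans hgy.symm)
    · rintro rfl
      exact ⟨hy, by rw [hg z hy.2.ne, hgy]⟩
  rw [rootY, hroots, csSup_singleton]
  refine ⟨hy, ?_⟩
  have : 1 - y ≠ 0 := sub_ne_zero.2 hy.2.ne'
  rw [← hgy, ← hg y hy.2.ne, div_mul_cancel₀ _ this]

lemma funA_eq {k : ℕ} {Q q : ℝ} (hQ : 0 < Q) (hy : rootY k Q q ∈ Set.Ioo 0 1) :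
    funA k Q q = (1 - q) * logb 2 (1 - q)
      + q * (logb 2 (Q / (1 - rootY k Q q)) + k * logb 2 (rootY k Q q))
      + k * Q * (logb 2 (1 - rootY k Q q) - logb 2 (rootY k Q q)) + k * binH Q := by
  obtain ⟨hy0, hy1⟩ := hy
  have h1y : 1 - rootY k Q q ≠ 0 := by linarith
  rw [funA, logb_div (by positivity) h1y, logb_mul hQ.ne' (by positivity), logb_pow,
    logb_div h1y hy0.ne', logb_div hQ.ne' h1y]
  ring

theorem stmt_17_general (k : ℕ) (Q q : ℝ) (hQ0 : 0 < Q)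
    (h1 : Q < q) (h2 : q < min 1 ((k : ℝ) * Q))
    (F : ((Fin k → Bool) → ℝ) → ℝ)
    (hF : ∀ ρ : (Fin k → Bool) → ℝ,
      F ρ = (∑ u : Fin k → Bool, ρ u * Real.logb 2 (ρ u)) + (k : ℝ) * binH Q)
    (ρstar : (Fin k → Bool) → ℝ)
    (hρstar : ∀ u : Fin k → Bool,
      ρstar u = if u = (fun _ => false) then 1 - q
        else Q / (1 - rootY k Q q) * (1 - rootY k Q q) ^ wt u
              * rootY k Q q ^ (k - wt u)) :
    ((∀ u, ρstar u ∈ Set.Ioo (0 : ℝ) 1) ∧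
      (∑ u : Fin k → Bool, ρstar u) = 1 ∧
      ρstar (fun _ => false) = 1 - q ∧
      (∀ i : Fin k,
        ∑ u ∈ Finset.univ.filter (fun u : Fin k → Bool => u i = true), ρstar u = Q)) ∧
    F ρstar = funA k Q q ∧
    (∀ ρ : (Fin k → Bool) → ℝ,
      (∀ u, ρ u ∈ Set.Ioo (0 : ℝ) 1) →
      (∑ u : Fin k → Bool, ρ u) = 1 →
      ρ (fun _ => false) = 1 - q →
      (∀ i : Fin k,
        ∑ u ∈ Finset.univ.filter (fun u : Fin k → Bool => u i = true), ρ u = Q) →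
      funA k Q q ≤ F ρ ∧ (F ρ = funA k Q q → ρ = ρstar)) := by
  have hq1 : q < 1 := h2.trans_le (min_le_left _ _)
  have hqk : q < k * Q := h2.trans_le (min_le_right _ _)
  have : Nonempty (Fin k) :=
    Fin.pos_iff_nonempty.1 (by exact_mod_cast (by nlinarith : (0 : ℝ) < k))
  obtain ⟨hy, hyq⟩ := rootY_spec hQ0 h1 hqk
  set y := rootY k Q q
  have h1y : 0 < 1 - y := by linarith [hy.2]
  have hρ : ρstar = productOffZero k (1 - q) (Q / (1 - y)) (1 - y) y := funext hρstar
  have hpos : ∀ u, 0 < ρstar u :=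
    hρ ▸ productOffZero_pos (by linarith) (div_pos hQ0 h1y) h1y hy.1
  have hzero : ρstar (fun _ => false) = 1 - q := by simp [hρ, productOffZero]
  have hsum : ∑ u, ρstar u = 1 := by
    rw [hρ, sum_productOffZero, sub_add_cancel, one_pow, div_mul_eq_mul_div, ← hyq,
      mul_div_cancel_right₀ _ h1y.ne', sub_add_cancel]
  have hmarg : ∀ i : Fin k,
      ∑ u ∈ univ.filter (fun u : Fin k → Bool => u i = true), ρstar u = Q := by
    intro i
    rw [hρ, sum_filter_productOffZero, sub_add_cancel, one_pow, mul_one,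
      div_mul_cancel₀ _ h1y.ne']
  have hcross : ∀ ρ : (Fin k → Bool) → ℝ, ∑ u, ρ u = 1 → ρ (fun _ => false) = 1 - q →
      (∀ i : Fin k, ∑ u ∈ univ.filter (fun u : Fin k → Bool => u i = true), ρ u = Q) →
      ∑ u, ρ u * logb 2 (ρstar u) = funA k Q q - k * binH Q := by
    intro ρ hρsum hρzero hρmarg
    rw [hρ, sum_mul_logb_productOffZero 2 (div_pos hQ0 h1y) h1y hy.1 ρ hρsum hρzero hρmarg,
      funA_eq hQ0 hy]
    ring
  refine ⟨⟨fun u => ⟨hpos u, (lt_sum_of_pos hpos u).trans_eq hsum⟩, hsum, hzero, hmarg⟩,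
    by rw [hF, hcross _ hsum hzero hmarg, sub_add_cancel], ?_⟩
  intro ρ hρIoo hρsum hρzero hρmarg
  have hρpos : ∀ u, 0 < ρ u := fun u => (hρIoo u).1
  have hsums : ∑ u, ρ u = ∑ u, ρstar u := hρsum.trans hsum.symm
  rw [hF, ← sub_add_cancel (funA k Q q) (k * binH Q), ← hcross ρ hρsum hρzero hρmarg]
  exact ⟨(add_le_add_iff_right _).2 (sum_mul_logb_le_sum_mul_logb one_lt_two hρpos hpos hsums),
    fun h => eq_of_sum_mul_logb_eq one_lt_two hρpos hpos hsums (add_right_cancel h)⟩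

/-- the extremal distribution
`ρ*(0…0) = 1−q`, `ρ*(u) = (Q/(1−y))·(1−y)^{w(u)}·y^{k−w(u)}` for `u ≠ 0…0`
(`y = y(k,Q,q)`) satisfies the constraints `Σ ρ(u) = 1`, `ρ(0…0) = 1−q`,
`Σ_{u : u_i = 1} ρ(u) = Q` for all `i`, attains `F(ρ*) = A(k,Q,q)`, and minimizes
`F(ρ) = Σ ρ(u) log₂ ρ(u) + k·h(Q)` among all `ρ : {0,1}^k → (0,1)` satisfying these
constraints, with equality only at `ρ = ρ*`. -/
theorem stmt_17 (k : ℕ) (hk : 2 ≤ k) (Q q : ℝ) (hQ0 : 0 < Q) (hQ1 : Q < 1)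
    (h1 : Q < q) (h2 : q < min 1 ((k : ℝ) * Q))
    (F : ((Fin k → Bool) → ℝ) → ℝ)
    (hF : ∀ ρ : (Fin k → Bool) → ℝ,
      F ρ = (∑ u : Fin k → Bool, ρ u * Real.logb 2 (ρ u)) + (k : ℝ) * binH Q)
    (ρstar : (Fin k → Bool) → ℝ)
    (hρstar : ∀ u : Fin k → Bool,
      ρstar u = if u = (fun _ => false) then 1 - q
        else Q / (1 - rootY k Q q) * (1 - rootY k Q q) ^ wt u
              * rootY k Q q ^ (k - wt u)) :
    ((∀ u, ρstar u ∈ Set.Ioo (0 : ℝ) 1) ∧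
      (∑ u : Fin k → Bool, ρstar u) = 1 ∧
      ρstar (fun _ => false) = 1 - q ∧
      (∀ i : Fin k,
        ∑ u ∈ Finset.univ.filter (fun u : Fin k → Bool => u i = true), ρstar u = Q)) ∧
    F ρstar = funA k Q q ∧
    (∀ ρ : (Fin k → Bool) → ℝ,
      (∀ u, ρ u ∈ Set.Ioo (0 : ℝ) 1) →
      (∑ u : Fin k → Bool, ρ u) = 1 →
      ρ (fun _ => false) = 1 - q →
      (∀ i : Fin k,
        ∑ u ∈ Finset.univ.filter (fun u : Fin k → Bool => u i = true), ρ u = Q) →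
      funA k Q q ≤ F ρ ∧ (F ρ = funA k Q q → ρ = ρstar)) :=
  stmt_17_general k Q q hQ0 h1 h2 F hF ρstar hρstar
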